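/- Let T be a semi-labeled tree over 𝒜 and let x, y be nodes of T. Then 𝒜_T(x) = 𝒜_T(y) if and only if x = y, and 𝒜_T(x) ⊊ 𝒜_T(y) if and only if there exists a non-trivial directed path from y to x. -/
import Mathlib


/-!
Common framework: rooted labeled trees ("𝒜-trees") following Llabrés–Rocha–Rosselló–Valiente.

A `PreTree α V` is the raw data of a directed graph on (a finite subset of) `V` together with
a partial labeling of its nodes by labels in `α`.  The predicate `PreTree.IsATree` asserts that
this data is a finite rooted tree (the root reaches every node by a unique directed path),
that the labeling is injective, and that every leaf is labeled.
-/

structure PreTree (α : Type) (V : Type) where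
  nodes : Set V
  arc : V → V → Prop
  label : V → Option α

namespace PreTree

variable {α V W : Type}

/-- There is a directed path from `u` to `v` (possibly trivial). -/
def path (T : PreTree α V) (u v : V) : Prop := Relation.ReflTransGen T.arc u v

/-- There is a non-trivial directed path (length ≥ 1) from `u` to `v`. -/
def pathNT (T : PreTree α V) (u v : V) : Prop := Relation.TransGen T.arc u v

/-- `𝒜(T)`: the set of labels of all nodes of `T`. -/
def labelSet (T : PreTree α V) : Set α := {a | ∃ v, T.label v = some a}

/-- `𝒜_T(v)`: the cluster of `v`, i.e. the set of labels of all descendants of `v`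
(including `v` itself). -/
def cluster (T : PreTree α V) (v : V) : Set α := {a | ∃ w, T.path v w ∧ T.label w = some a}

/-- `𝒞_𝒜(T)`: the cluster representation of `T`. -/
def clusterRep (T : PreTree α V) : Set (Set α) := {C | ∃ v ∈ T.nodes, T.cluster v = C}

/-- A leaf is a node without children. -/
def IsLeaf (T : PreTree α V) (v : V) : Prop := v ∈ T.nodes ∧ ∀ w, ¬ T.arc v w

/-- `ℒ(T)`: the set of labels of the leaves of `T`. -/
def leafLabels (T : PreTree α V) : Set α := {a | ∃ v, T.IsLeaf v ∧ T.label v = some a}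

/-- A node is elementary when it has exactly one child. -/
def IsElementary (T : PreTree α V) (v : V) : Prop := ∃! w, T.arc v w

/-- `T` is an 𝒜-tree: a finite rooted tree (every node reachable from the root by a unique
directed path, which is captured by unique parents, acyclicity and reachability from a root)
with an injective partial labeling such that every leaf is labeled. -/
structure IsATree (T : PreTree α V) : Prop where
  finite_nodes : T.nodes.Finite
  arc_mem_left : ∀ {u v : V}, T.arc u v → u ∈ T.nodes
  arc_mem_right : ∀ {u v : V}, T.arc u v → v ∈ T.nodes
  parent_unique : ∀ {u v w : V}, T.arc u w → T.arc v w → u = v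
  acyclic : ∀ {u v : V}, T.arc u v → ¬ T.path v u
  rooted : T.nodes.Nonempty → ∃ r ∈ T.nodes, ∀ v ∈ T.nodes, T.path r v
  label_mem : ∀ {v : V} {a : α}, T.label v = some a → v ∈ T.nodes
  label_inj : ∀ {u v : V} {a : α}, T.label u = some a → T.label v = some a → u = v
  leaf_labeled : ∀ v ∈ T.nodes, (∀ w, ¬ T.arc v w) → ∃ a, T.label v = some a

/-- A semi-labeled tree over `𝒜` is an 𝒜-tree all of whose elementary nodes are labeled. -/
def IsSemiLabeled (T : PreTree α V) : Prop :=
  T.IsATree ∧ ∀ v ∈ T.nodes, T.IsElementary v → ∃ a, T.label v = some a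

open Classical in
/-- The restriction `T|X`: the subtree of `T` induced on the nodes whose cluster meets `X`,
keeping exactly the labels that belong to `X`. -/
noncomputable def restrict (T : PreTree α V) (X : Set α) : PreTree α V where
  nodes := {v | v ∈ T.nodes ∧ (T.cluster v ∩ X).Nonempty}
  arc u v := T.arc u v ∧ (T.cluster u ∩ X).Nonempty ∧ (T.cluster v ∩ X).Nonempty
  label v := if (∃ a ∈ X, T.label v = some a) then T.label v else none

/-- A weak topological embedding `f : S → T`: an injective map on nodes which preserves labels
and preserves and reflects directed paths. -/
def IsWTE (S : PreTree α V) (T : PreTree α W) (f : V → W) : Prop :=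
  (∀ v ∈ S.nodes, f v ∈ T.nodes) ∧
  (∀ u ∈ S.nodes, ∀ v ∈ S.nodes, f u = f v → u = v) ∧
  (∀ (v : V) (a : α), S.label v = some a → T.label (f v) = some a) ∧
  (∀ u ∈ S.nodes, ∀ v ∈ S.nodes, (S.path u v ↔ T.path (f u) (f v)))

/-- Two 𝒜-trees are ancestrally compatible when they admit weak topological embeddings into
a same 𝒜-tree. -/
def AncCompat (T₁ : PreTree α V) (T₂ : PreTree α W) : Prop :=
  ∃ (U : Type) (T : PreTree α U), T.IsATree ∧ (∃ f, IsWTE T₁ T f) ∧ (∃ g, IsWTE T₂ T g)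

/-- `m` is the most recent common ancestor of `x` and `y` in `T`. -/
def IsMRCA (T : PreTree α V) (x y m : V) : Prop :=
  T.path m x ∧ T.path m y ∧ ∀ n, T.path n x → T.path n y → T.path n m

/-- Local compatibility: condition (C1) on pairs of common labels and condition (C2)
on triples of common labels. -/
def LocallyCompatible (T₁ : PreTree α V) (T₂ : PreTree α W) : Prop :=
  (∀ (a b : α) (x₁ y₁ : V) (x₂ y₂ : W),
      T₁.label x₁ = some a → T₁.label y₁ = some b →
      T₂.label x₂ = some a → T₂.label y₂ = some b →
      (T₁.path x₁ y₁ ↔ T₂.path x₂ y₂)) ∧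
  (∀ (a b c : α) (va₁ vb₁ vc₁ m₁ m₁' : V) (va₂ vb₂ vc₂ m₂ m₂' : W),
      T₁.label va₁ = some a → T₁.label vb₁ = some b → T₁.label vc₁ = some c →
      T₂.label va₂ = some a → T₂.label vb₂ = some b → T₂.label vc₂ = some c →
      IsMRCA T₁ vb₁ vc₁ m₁ → IsMRCA T₁ va₁ vb₁ m₁' →
      IsMRCA T₂ va₂ vb₂ m₂ → IsMRCA T₂ vb₂ vc₂ m₂' →
      T₁.pathNT m₁ m₁' → ¬ T₂.pathNT m₂ m₂')

/-- `T` ancestrally displays `S`. -/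
def Displays (T : PreTree α W) (S : PreTree α V) : Prop :=
  S.labelSet ⊆ T.labelSet ∧
  (∀ (a b : α) (x y : V) (x' y' : W),
      S.label x = some a → S.label y = some b →
      T.label x' = some a → T.label y' = some b →
      (S.path x y ↔ T.path x' y')) ∧
  S.clusterRep ⊆ (T.restrict S.labelSet).clusterRep

/-- An unlabeled elementary node. -/
def ElemUnlab (T : PreTree α V) (v : V) : Prop := T.label v = none ∧ T.IsElementary v

/-- The semi-labeled tree obtained from `S` by removing its unlabeled elementary nodes and
replacing by single arcs the maximal paths all of whose intermediate nodes are unlabeled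
and elementary. -/
def contract (S : PreTree α V) : PreTree α V where
  nodes := {v | v ∈ S.nodes ∧ ¬ ElemUnlab S v}
  arc u v := (u ∈ S.nodes ∧ ¬ ElemUnlab S u) ∧ (v ∈ S.nodes ∧ ¬ ElemUnlab S v) ∧
    ∃ l : List V, List.Chain' S.arc (u :: (l ++ [v])) ∧ ∀ m ∈ l, ElemUnlab S m
  label := S.label

/-- `X` is the smallest member of the family `R` containing the label `a`. -/
def SmallestContaining (R : Set (Set α)) (a : α) (X : Set α) : Prop :=
  X ∈ R ∧ a ∈ X ∧ ∀ Y ∈ R, a ∈ Y → X ⊆ Y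

/-- `m_{ℓ,Y}`: the number of nodes of `T` whose cluster is `Y`. -/
noncomputable def mcount (T : PreTree α V) (Y : Set α) : ℕ :=
  {v | v ∈ T.nodes ∧ T.cluster v = Y}.ncard

/-- `𝒞 = 𝒞_𝒜(T₁) ∪ 𝒞_𝒜(T₂)`. -/
def joinC (T₁ : PreTree α V) (T₂ : PreTree α W) : Set (Set α) :=
  T₁.clusterRep ∪ T₂.clusterRep

/-- `n_Y = max (m_{1,Y}, m_{2,Y})`. -/
noncomputable def joinN (T₁ : PreTree α V) (T₂ : PreTree α W) (Y : Set α) : ℕ :=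
  max (mcount T₁ Y) (mcount T₂ Y)

open Classical in
/-- The join `T_{1,2}` of two 𝒜-trees with the same label set: nodes are the pairs
`w_{Y,j} = (Y, j)` with `Y ∈ 𝒞` and `1 ≤ j ≤ n_Y`, with the chain arcs `(w_{Y,j}, w_{Y,j-1})`
and the arcs `(w_{Y,1}, w_{Z,n_Z})` for `Z ⊊ Y` maximal in `𝒞`, and `w_{Y,1}` labeled `A`
exactly when `Y = (⋃ {Z ∈ 𝒞 ∣ Z ⊊ Y}) ⊔ {A}`. -/
noncomputable def join (T₁ : PreTree α V) (T₂ : PreTree α W) : PreTree α (Set α × ℕ) where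
  nodes := {p | p.1 ∈ joinC T₁ T₂ ∧ 1 ≤ p.2 ∧ p.2 ≤ joinN T₁ T₂ p.1}
  arc p q := p.1 ∈ joinC T₁ T₂ ∧ q.1 ∈ joinC T₁ T₂ ∧
    ((q.1 = p.1 ∧ p.2 = q.2 + 1 ∧ 1 ≤ q.2 ∧ p.2 ≤ joinN T₁ T₂ p.1) ∨
     (p.2 = 1 ∧ q.1 ⊂ p.1 ∧ q.2 = joinN T₁ T₂ q.1 ∧ 1 ≤ q.2 ∧
       ¬ ∃ Z ∈ joinC T₁ T₂, q.1 ⊂ Z ∧ Z ⊂ p.1))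
  label p :=
    if h : p.2 = 1 ∧ p.1 ∈ joinC T₁ T₂ ∧
        ∃ a : α, a ∉ ⋃₀ {Z ∈ joinC T₁ T₂ | Z ⊂ p.1} ∧
          p.1 = (⋃₀ {Z ∈ joinC T₁ T₂ | Z ⊂ p.1}) ∪ {a}
    then some h.2.2.choose else none

/-- The canonical map `f_ℓ : V(T_ℓ) → V(T_{1,2})`, sending the `i`-th node (from the bottom)
of the chain of nodes of `T` with cluster `Y` to `w_{Y,i}`. -/
noncomputable def joinMap (T : PreTree α V) (v : V) : Set α × ℕ :=
  (T.cluster v, {u | u ∈ T.nodes ∧ T.cluster u = T.cluster v ∧ T.pathNT v u}.ncard + 1)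

end PreTree

namespace PreTree

variable {α V : Type}

lemma cluster_subset_of_path (T : PreTree α V) {u v : V} (h : T.path u v) :
    T.cluster v ⊆ T.cluster u := by
  rintro a ⟨w, hw, hl⟩
  exact ⟨w, h.trans hw, hl⟩

/-- Two ancestors of a common node are comparable. -/
lemma path_comparable (T : PreTree α V) (hT : T.IsATree) {x y w : V}
    (hy : T.path y w) (hx : T.path x w) : T.path x y ∨ T.path y x := by
  revert hx
  induction hy with
  | refl => exact fun hx => Or.inl hx
  | @tail b w' hyb harc ih =>
    intro hx
    rcases Relation.ReflTransGen.cases_tail hx with rfl | ⟨c, hxc, hcw⟩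
    · exact Or.inr (hyb.tail harc)
    · exact ih (hT.parent_unique hcw harc ▸ hxc)

lemma mem_of_path (T : PreTree α V) (hT : T.IsATree) {v w : V}
    (hv : v ∈ T.nodes) (h : T.path v w) : w ∈ T.nodes := by
  induction h with
  | refl => exact hv
  | tail _ harc _ => exact hT.arc_mem_right harc

lemma descendants_finite (T : PreTree α V) (hT : T.IsATree) {v : V}
    (hv : v ∈ T.nodes) : {w | T.path v w}.Finite :=
  hT.finite_nodes.subset (fun _ hw => T.mem_of_path hT hv hw)

lemma cluster_nonempty (T : PreTree α V) (hT : T.IsATree) :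
    ∀ v ∈ T.nodes, ∃ a, a ∈ T.cluster v := by
  have key : ∀ n (v : V), v ∈ T.nodes → {w | T.path v w}.ncard ≤ n →
      ∃ a, a ∈ T.cluster v := by
    intro n
    induction n with
    | zero =>
      intro v hv hcard
      have : 0 < {w | T.path v w}.ncard :=
        (Set.ncard_pos (T.descendants_finite hT hv)).mpr ⟨v, Relation.ReflTransGen.refl⟩
      omega
    | succ n ih =>
      intro v hv hcard
      by_cases hleaf : ∀ w, ¬ T.arc v w
      · obtain ⟨a, ha⟩ := hT.leaf_labeled v hv hleaf
        exact ⟨a, v, Relation.ReflTransGen.refl, ha⟩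
      · push_neg at hleaf
        obtain ⟨c, hc⟩ := hleaf
        have hsub : {w | T.path c w} ⊆ {w | T.path v w} :=
          fun w hw => (Relation.ReflTransGen.single hc).trans hw
        have hvnot : v ∉ {w | T.path c w} := fun h => hT.acyclic hc h
        have hlt : {w | T.path c w}.ncard < {w | T.path v w}.ncard :=
          Set.ncard_lt_ncard ⟨hsub, fun h => hvnot (h Relation.ReflTransGen.refl)⟩ (T.descendants_finite hT hv)
        obtain ⟨a, w, hw, hl⟩ := ih c (hT.arc_mem_right hc) (by omega)
        exact ⟨a, w, (Relation.ReflTransGen.single hc).trans hw, hl⟩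
  exact fun v hv => key {w | T.path v w}.ncard v hv le_rfl

/-- A non-trivial path yields strict cluster inclusion (semi-labeled trees). -/
lemma cluster_ssubset_of_pathNT (T : PreTree α V) (hT : T.IsSemiLabeled) {x y : V}
    (hy : y ∈ T.nodes) (h : T.pathNT y x) : T.cluster x ⊂ T.cluster y := by
  obtain ⟨c, hyc, hcx⟩ := Relation.TransGen.head'_iff.mp h
  refine ⟨T.cluster_subset_of_path h.to_reflTransGen, ?_⟩
  by_cases helem : T.IsElementary y
  · obtain ⟨a, ha⟩ := hT.2 y hy helem
    intro hcon
    obtain ⟨w, hxw, hl⟩ := hcon ⟨y, Relation.ReflTransGen.refl, ha⟩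
    have : w = y := hT.1.label_inj hl ha
    subst this
    exact hT.1.acyclic hyc (hcx.trans hxw)
  · obtain ⟨c', hyc', hne⟩ : ∃ c', T.arc y c' ∧ c' ≠ c := by
      by_contra hcon
      push_neg at hcon
      exact helem ⟨c, hyc, fun w hw => hcon w hw⟩
    obtain ⟨a, w, hc'w, hl⟩ := T.cluster_nonempty hT.1 c' (hT.1.arc_mem_right hyc')
    intro hcon
    obtain ⟨w2, hxw2, hl2⟩ := hcon ⟨w, (Relation.ReflTransGen.single hyc').trans hc'w, hl⟩
    have hw2 : w2 = w := hT.1.label_inj hl2 hl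
    rw [hw2] at hxw2
    have hcw : T.path c w := hcx.trans hxw2
    rcases T.path_comparable hT.1 hc'w hcw with hcc' | hc'c
    · rcases Relation.ReflTransGen.cases_tail hcc' with heq | ⟨d, hcd, hdc'⟩
      · exact hne heq
      · have : d = y := hT.1.parent_unique hdc' hyc'
        subst this
        exact hT.1.acyclic hyc hcd
    · rcases Relation.ReflTransGen.cases_tail hc'c with heq | ⟨d, hc'd, hdc⟩
      · exact hne heq.symm
      · have : d = y := hT.1.parent_unique hdc hyc
        subst this
        exact hT.1.acyclic hyc' hc'd

end PreTree

/-- In a semi-labeled tree, clusters are equal iff the nodes are equal, and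
strict inclusion of clusters corresponds exactly to non-trivial directed paths. -/
theorem stmt3 {α V : Type} (T : PreTree α V) (hT : T.IsSemiLabeled)
    (x y : V) (hx : x ∈ T.nodes) (hy : y ∈ T.nodes) :
    (T.cluster x = T.cluster y ↔ x = y) ∧
    (T.cluster x ⊂ T.cluster y ↔ T.pathNT y x) := by
  have pathNT_of_ne : ∀ {u v : V}, T.path u v → u ≠ v → T.pathNT u v := by
    intro u v h hne
    rcases Relation.ReflTransGen.cases_head h with rfl | ⟨c, huc, hcv⟩
    · exact absurd rfl hne
    · exact Relation.TransGen.head' huc hcv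
  -- comparability of x and y
  have comp : T.cluster x ⊆ T.cluster y → T.path x y ∨ T.path y x := by
    intro hsub
    obtain ⟨a, w, hxw, hl⟩ := T.cluster_nonempty hT.1 x hx
    obtain ⟨w2, hyw2, hl2⟩ := hsub ⟨w, hxw, hl⟩
    have : w2 = w := hT.1.label_inj hl2 hl
    subst this
    exact T.path_comparable hT.1 hyw2 hxw
  constructor
  · constructor
    · intro heq
      by_contra hne
      rcases comp heq.subset with hxy | hyx
      · exact (T.cluster_ssubset_of_pathNT hT (hy := hx) (pathNT_of_ne hxy hne)).ne heq.symm
      · exact (T.cluster_ssubset_of_pathNT hT (hy := hy)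
          (pathNT_of_ne hyx (Ne.symm hne))).ne heq
    · rintro rfl; rfl
  · constructor
    · intro hss
      have hne : x ≠ y := fun h => hss.ne (by rw [h])
      rcases comp hss.subset with hxy | hyx
      · exact absurd (T.cluster_subset_of_path hxy) hss.not_subset
      · exact pathNT_of_ne hyx (Ne.symm hne)
    · exact fun h => T.cluster_ssubset_of_pathNT hT hy h
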